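/- arXiv:1506.00398 — 7 statements merged into one kernel-verified Lean document; each statement's English description precedes it below -/
import Mathlib

section
/- For every positive semidefinite complex d×d matrix ρ whose rank equals r, there exists a matrix V : Matrix (Fin d) (Fin r) ℂ such that VᴴV = 1_r, V·(Vᴴ·ρ·V)·Vᴴ = ρ, and Vᴴ·ρ·V is positive definite. In other words, every quantum state of rank r can be compressed losslessly (encoding E(ρ) = VᴴρV, decoding D(σ) = VσVᴴ) and maximally efficiently (the compressed state has full support) into an r-dimensional system. -/
/-!
Diagonalize `ρ = U diag(λ) Uᴴ`. As `ρ` is positive semidefinite of rank `r`, exactly `r`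
eigenvalues are nonzero, hence positive. Take for `V` the `r` columns of `U` belonging to them:
then `Vᴴ ρ V` is the diagonal matrix of these positive eigenvalues, and `V (Vᴴ ρ V) Vᴴ` is the
spectral decomposition of `ρ` with only the zero terms dropped.
-/

open Matrix
open scoped ComplexOrder

namespace Matrix

variable {l m n α : Type*}

theorem submatrix_conjTranspose_mul_submatrix_eq_one [NonAssocSemiring α] [StarRing α]
    [Fintype l] [DecidableEq m] [DecidableEq n] {A : Matrix l n α} (hA : Aᴴ * A = 1)
    {g : m → n} (hg : g.Injective) :
    (A.submatrix id g)ᴴ * A.submatrix id g = 1 := by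
  rw [conjTranspose_submatrix, ← submatrix_mul _ _ _ _ _ Function.bijective_id, hA,
    submatrix_one g hg]

theorem submatrix_conjTranspose_mul_mul_submatrix [NonUnitalNonAssocSemiring α] [StarRing α]
    [Fintype l] (A : Matrix l n α) (B : Matrix l l α) (g : m → n) :
    (A.submatrix id g)ᴴ * B * A.submatrix id g = (Aᴴ * B * A).submatrix g g := by
  rw [conjTranspose_submatrix, ← submatrix_id_id B,
    ← submatrix_mul _ _ _ _ _ Function.bijective_id,
    ← submatrix_mul _ _ _ _ _ Function.bijective_id]
  simp

theorem mul_diagonal_mul_eq_submatrix_of_injective [NonUnitalNonAssocSemiring α] [Fintype m]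
    [Fintype n] [DecidableEq m] [DecidableEq n] (U : Matrix l n α) (W : Matrix n l α)
    {w : n → α} {g : m → n}
    (hg : g.Injective) (hw : ∀ i ∉ Set.range g, w i = 0) :
    U * diagonal w * W = U.submatrix id g * diagonal (w ∘ g) * W.submatrix g id := by
  ext i j
  rw [mul_apply, mul_apply]
  simp only [mul_diagonal, submatrix_apply, id_eq, Function.comp_apply]
  exact (Fintype.sum_of_injective g hg _ _ (fun k hk => by simp [hw k hk]) fun _ => rfl).symm

end Matrix

namespace Matrix.IsHermitian

variable {𝕜 m n : Type*} [RCLike 𝕜] [Fintype n] [DecidableEq n] {A : Matrix n n 𝕜}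
  (hA : A.IsHermitian)
include hA

theorem conjTranspose_eigenvectorUnitary_mul_mul :
    (hA.eigenvectorUnitary : Matrix n n 𝕜)ᴴ * A * (hA.eigenvectorUnitary : Matrix n n 𝕜) =
      diagonal (RCLike.ofReal ∘ hA.eigenvalues) := by
  simpa [Unitary.conjStarAlgAut_apply, star_eq_conjTranspose] using
    hA.conjStarAlgAut_star_eigenvectorUnitary

theorem eigenvectorUnitary_mul_diagonal_mul :
    (hA.eigenvectorUnitary : Matrix n n 𝕜) * diagonal (RCLike.ofReal ∘ hA.eigenvalues) *
      (hA.eigenvectorUnitary : Matrix n n 𝕜)ᴴ = A := by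
  simpa [Unitary.conjStarAlgAut_apply, star_eq_conjTranspose] using hA.spectral_theorem.symm

variable [DecidableEq m] {g : m → n}

theorem eigenvectorUnitary_submatrix_conjTranspose_mul_self (hg : g.Injective) :
    (Matrix.submatrix (hA.eigenvectorUnitary : Matrix n n 𝕜) id g)ᴴ *
      Matrix.submatrix (hA.eigenvectorUnitary : Matrix n n 𝕜) id g = 1 :=
  submatrix_conjTranspose_mul_submatrix_eq_one (Unitary.coe_star_mul_self _) hg

theorem eigenvectorUnitary_submatrix_conjTranspose_mul_mul (hg : g.Injective) :
    (Matrix.submatrix (hA.eigenvectorUnitary : Matrix n n 𝕜) id g)ᴴ * A *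
      Matrix.submatrix (hA.eigenvectorUnitary : Matrix n n 𝕜) id g =
      diagonal (RCLike.ofReal ∘ hA.eigenvalues ∘ g) := by
  rw [submatrix_conjTranspose_mul_mul_submatrix, hA.conjTranspose_eigenvectorUnitary_mul_mul,
    submatrix_diagonal _ g hg]
  rfl

theorem eigenvectorUnitary_submatrix_mul_diagonal_mul [Fintype m] (hg : g.Injective)
    (hker : ∀ i ∉ Set.range g, hA.eigenvalues i = 0) :
    Matrix.submatrix (hA.eigenvectorUnitary : Matrix n n 𝕜) id g *
      (diagonal (RCLike.ofReal ∘ hA.eigenvalues ∘ g) : Matrix m m 𝕜) *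
      (Matrix.submatrix (hA.eigenvectorUnitary : Matrix n n 𝕜) id g)ᴴ = A := by
  conv_rhs => rw [← hA.eigenvectorUnitary_mul_diagonal_mul]
  rw [mul_diagonal_mul_eq_submatrix_of_injective _ _ hg fun i hi => by simp [hker i hi],
    conjTranspose_submatrix]
  rfl

end Matrix.IsHermitian

theorem Fintype.exists_injective_range_eq_setOf {m n : Type*} [Fintype m] {p : n → Prop}
    [Fintype {i // p i}] (hcard : Fintype.card m = Fintype.card {i // p i}) :
    ∃ g : m → n, g.Injective ∧ Set.range g = {i | p i} := by
  classical
  let e := Fintype.equivOfCardEq hcard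
  refine ⟨Subtype.val ∘ e, Subtype.val_injective.comp e.injective, ?_⟩
  rw [Set.range_comp, e.range_eq_univ, Set.image_univ, Subtype.range_coe_subtype]

theorem stmt5 (d r : ℕ) (ρ : Matrix (Fin d) (Fin d) ℂ)
    (hρ : ρ.PosSemidef) (hrank : ρ.rank = r) :
    ∃ V : Matrix (Fin d) (Fin r) ℂ,
      Vᴴ * V = 1 ∧ V * (Vᴴ * ρ * V) * Vᴴ = ρ ∧ (Vᴴ * ρ * V).PosDef := by
  have hH := hρ.isHermitian
  obtain ⟨g, hg, hrange⟩ := Fintype.exists_injective_range_eq_setOf (m := Fin r)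
    (p := (hH.eigenvalues · ≠ 0))
    (by rw [Fintype.card_fin, ← hrank, hH.rank_eq_card_non_zero_eigs])
  have hcompress := hH.eigenvectorUnitary_submatrix_conjTranspose_mul_mul hg
  refine ⟨_, hH.eigenvectorUnitary_submatrix_conjTranspose_mul_self hg, ?_, ?_⟩
  · rw [hcompress]
    exact hH.eigenvectorUnitary_submatrix_mul_diagonal_mul hg fun i hi => by
      simpa [hrange] using hi
  · rw [hcompress]
    refine PosDef.diagonal fun k => ?_
    have hk : hH.eigenvalues (g k) ≠ 0 := hrange.subset (Set.mem_range_self k)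
    simpa using (hρ.eigenvalues_nonneg (g k)).lt_of_ne' hk
end

section
/- Let p₀, p₁ be nonnegative reals with p₀ + p₁ = 1, let ρ = !![p₀, 0; 0, p₁], and let Ψ be the vector indexed by Fin 2 × Fin 2 with Ψ(0,0) = √p₀, Ψ(1,1) = √p₁ and 0 otherwise. Then for every vector Ψ' indexed by Fin 2 × Fin 2 satisfying ptr₂(Ψ'Ψ'ᴴ) = ρ, there exists a 2×2 unitary matrix U such that Ψ' = (1₂ ⊗ₖ U) *ᵥ Ψ. That is, every purification of a qubit state with a single purifying qubit is obtained from the canonical purification by a reversible transformation on the purifying system. -/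
/-!
The slices `Ψ'(i, ·)` of a purification of `diag p` are pairwise orthogonal with `‖Ψ'(i, ·)‖² = pᵢ`.
Normalising the nonzero slices and extending them to an orthonormal basis `b` writes
`Ψ'(i, ·) = √pᵢ • bᵢ`; the change-of-basis matrix from the standard basis to `b` is the unitary `U`.
-/

open Matrix
open scoped Kronecker

noncomputable section

/-- Partial trace over the second tensor factor. -/
def ptr2 {m n : ℕ} (X : Matrix (Fin m × Fin n) (Fin m × Fin n) ℂ) :
    Matrix (Fin m) (Fin m) ℂ :=
  Matrix.of fun i j => ∑ k : Fin n, X (i, k) (j, k)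

/-- outer product `v vᴴ` of a complex vector with itself. -/
def outerC {α : Type*} (v : α → ℂ) : Matrix α α ℂ :=
  Matrix.of fun a b => v a * star (v b)

/-- The canonical purification `√p₀ e₀⊗e₀ + √p₁ e₁⊗e₁`. -/
def Psi (p₀ p₁ : ℝ) : Fin 2 × Fin 2 → ℂ := fun p =>
  if p = (0, 0) then (Real.sqrt p₀ : ℂ)
  else if p = (1, 1) then (Real.sqrt p₁ : ℂ) else 0

theorem exists_orthonormalBasis_norm_smul_eq_of_pairwise_inner_eq_zero
    {𝕜 E ι : Type*} [RCLike 𝕜] [NormedAddCommGroup E] [InnerProductSpace 𝕜 E]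
    [FiniteDimensional 𝕜 E] [Fintype ι] (card_ι : Module.finrank 𝕜 E = Fintype.card ι)
    {f : ι → E} (hf : Pairwise fun i j => inner 𝕜 (f i) (f j) = 0) :
    ∃ b : OrthonormalBasis ι 𝕜 E, ∀ i, f i = (‖f i‖ : 𝕜) • b i := by
  set v : ι → E := fun i => (‖f i‖⁻¹ : 𝕜) • f i
  have hv : Orthonormal 𝕜 (({i | f i ≠ 0} : Set ι).domRestrict v) := by
    refine ⟨fun ⟨i, hi⟩ => norm_smul_inv_norm hi, fun i j hij => ?_⟩
    simp only [Set.domRestrict_apply, v, inner_smul_left, inner_smul_right,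
      hf (Subtype.coe_ne_coe.mpr hij), mul_zero]
  obtain ⟨b, hb⟩ := hv.exists_orthonormalBasis_extension_of_card_eq card_ι
  refine ⟨b, fun i => ?_⟩
  by_cases hi : f i = 0
  · simp [hi]
  · rw [hb i hi, smul_smul, mul_inv_cancel₀ (by simpa using hi), one_smul]

/-- `slice Ψ i = (⟨i| ⊗ 1) Ψ`. -/
def slice {m n : ℕ} (Ψ : Fin m × Fin n → ℂ) (i : Fin m) : EuclideanSpace ℂ (Fin n) :=
  WithLp.toLp 2 fun k => Ψ (i, k)

theorem ptr2_outerC_apply {m n : ℕ} (Ψ : Fin m × Fin n → ℂ) (i j : Fin m) :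
    ptr2 (outerC Ψ) i j = inner ℂ (slice Ψ j) (slice Ψ i) :=
  rfl

theorem exists_unitary_of_ptr2_outerC_eq_diagonal {n : ℕ} (Ψ : Fin n × Fin n → ℂ)
    (p : Fin n → ℝ) (hΨ : ptr2 (outerC Ψ) = diagonal fun i => (p i : ℂ)) :
    ∃ U : Matrix (Fin n) (Fin n) ℂ, Uᴴ * U = 1 ∧ U * Uᴴ = 1 ∧
      ∀ i k, Ψ (i, k) = U k i * Real.sqrt (p i) := by
  have horth : Pairwise fun i j => inner ℂ (slice Ψ i) (slice Ψ j) = 0 := fun i j hij => by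
    simp only [← ptr2_outerC_apply, hΨ, diagonal_apply_ne _ hij.symm]
  have hnorm : ∀ i, ‖slice Ψ i‖ = Real.sqrt (p i) := fun i => by
    have hsq : ‖slice Ψ i‖ ^ 2 = p i := by
      have := ptr2_outerC_apply Ψ i i
      rw [hΨ, diagonal_apply_eq, inner_self_eq_norm_sq_to_K] at this
      exact Complex.ofReal_injective (by push_cast; exact this.symm)
    rw [← hsq, Real.sqrt_sq (norm_nonneg _)]
  obtain ⟨b, hb⟩ := exists_orthonormalBasis_norm_smul_eq_of_pairwise_inner_eq_zero
    (by simp) horth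
  let e := EuclideanSpace.basisFun (Fin n) ℂ
  refine ⟨e.toBasis.toMatrix b, e.toMatrix_orthonormalBasis_conjTranspose_mul_self b,
    e.toMatrix_orthonormalBasis_self_mul_conjTranspose b, fun i k => ?_⟩
  have := congrArg (fun v : EuclideanSpace ℂ (Fin n) => v k) (hb i)
  rw [hnorm] at this
  simpa [slice, mul_comm, e, Module.Basis.toMatrix_apply] using this

theorem kronecker_one_mulVec_apply {R ι κ : Type*} [CommSemiring R] [Fintype ι] [DecidableEq ι]
    [Fintype κ] (U : Matrix κ κ R) (Φ : ι × κ → R) (i : ι) (k : κ) :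
    (((1 : Matrix ι ι R) ⊗ₖ U) *ᵥ Φ) (i, k) = ∑ l, U k l * Φ (i, l) := by
  simp [mulVec, dotProduct, Fintype.sum_prod_type, one_apply]

theorem Psi_apply (p₀ p₁ : ℝ) (i l : Fin 2) :
    Psi p₀ p₁ (i, l) = if l = i then (Real.sqrt (![p₀, p₁] i) : ℂ) else 0 := by
  fin_cases i <;> fin_cases l <;> simp [Psi]

theorem stmt7_general (p₀ p₁ : ℝ)
    (Ψ' : Fin 2 × Fin 2 → ℂ)
    (hΨ' : ptr2 (outerC Ψ') = !![(p₀ : ℂ), 0; 0, (p₁ : ℂ)]) :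
    ∃ U : Matrix (Fin 2) (Fin 2) ℂ, Uᴴ * U = 1 ∧ U * Uᴴ = 1 ∧
      Ψ' = ((1 : Matrix (Fin 2) (Fin 2) ℂ) ⊗ₖ U) *ᵥ Psi p₀ p₁ := by
  have hdiag : ptr2 (outerC Ψ') = diagonal fun i => ((![p₀, p₁] i : ℝ) : ℂ) := by
    rw [hΨ']
    ext i j
    fin_cases i <;> fin_cases j <;> rfl
  obtain ⟨U, hUU, hUU', hU⟩ := exists_unitary_of_ptr2_outerC_eq_diagonal Ψ' _ hdiag
  refine ⟨U, hUU, hUU', funext fun ⟨i, k⟩ => ?_⟩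
  simp [kronecker_one_mulVec_apply, Psi_apply, hU]

theorem stmt7 (p₀ p₁ : ℝ) (h0 : 0 ≤ p₀) (h1 : 0 ≤ p₁) (hsum : p₀ + p₁ = 1)
    (Ψ' : Fin 2 × Fin 2 → ℂ)
    (hΨ' : ptr2 (outerC Ψ') = !![(p₀ : ℂ), 0; 0, (p₁ : ℂ)]) :
    ∃ U : Matrix (Fin 2) (Fin 2) ℂ, Uᴴ * U = 1 ∧ U * Uᴴ = 1 ∧
      Ψ' = ((1 : Matrix (Fin 2) (Fin 2) ℂ) ⊗ₖ U) *ᵥ Psi p₀ p₁ :=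
  stmt7_general p₀ p₁ Ψ' hΨ'

end
end

section
/- Let ρ₀ be a d×d complex density matrix that is not positive definite (i.e. ρ₀ does not have full rank). Then there exist a d×d density matrix ρ₁ and a d×d complex matrix P with 0 ≤ P ≤ 1 in the Loewner order (both P and 1 − P positive semidefinite) such that trace(P·ρ₀) = 0 and trace(P·ρ₁) = 1. That is, quantum theory satisfies Perfect State Discrimination: every non-internal normalized state can be perfectly distinguished from some other state. -/
open Matrix
open scoped ComplexOrder

/-!
A positive semidefinite matrix that is not positive definite is singular, so `ρ₀ v = 0` for
some `v ≠ 0`. The orthogonal projection `P` onto `ℂ v` is a star projection, hence `0 ≤ P ≤ 1`;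
`tr (P ρ₀) = tr (ρ₀ P) = 0` because `ρ₀ v = 0`, and `ρ₁ := P` is a pure state with
`tr (P ρ₁) = tr P = 1`.
-/

namespace Matrix

section Field

variable {K n : Type*} [Field K] [StarRing K] [Fintype n]

def lineProjection (v : n → K) : Matrix n n K :=
  (star v ⬝ᵥ v)⁻¹ • vecMulVec v (star v)

variable {v : n → K}

theorem isStarProjection_lineProjection (hv : star v ⬝ᵥ v ≠ 0) :
    IsStarProjection (lineProjection v) where
  isIdempotentElem := by
    rw [IsIdempotentElem, lineProjection, smul_mul_smul_comm, vecMulVec_mul_vecMulVec,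
      vecMulVec_smul, smul_smul, mul_assoc, inv_mul_cancel₀ hv, mul_one]
  isSelfAdjoint := by
    rw [IsSelfAdjoint, lineProjection, star_smul, star_inv₀, ← star_dotProduct,
      star_eq_conjTranspose, conjTranspose_vecMulVec, star_star]

theorem trace_lineProjection (hv : star v ⬝ᵥ v ≠ 0) : (lineProjection v).trace = 1 := by
  rw [lineProjection, trace_smul, trace_vecMulVec, smul_eq_mul, dotProduct_comm v,
    inv_mul_cancel₀ hv]

theorem trace_lineProjection_mul_eq_zero {A : Matrix n n K} (hA : A *ᵥ v = 0) :
    (lineProjection v * A).trace = 0 := by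
  rw [trace_mul_comm, lineProjection, mul_smul_comm, mul_vecMulVec, hA, zero_vecMulVec, smul_zero,
    trace_zero]

end Field

section RCLike

variable {𝕜 n : Type*} [RCLike 𝕜] [Fintype n]

open scoped MatrixOrder in
theorem _root_.IsStarProjection.posSemidef {P : Matrix n n 𝕜} (hP : IsStarProjection P) :
    P.PosSemidef :=
  nonneg_iff_posSemidef.mp hP.nonneg

theorem PosSemidef.exists_mulVec_eq_zero_of_not_posDef [DecidableEq n] {A : Matrix n n 𝕜}
    (hA : A.PosSemidef) (hA' : ¬ A.PosDef) : ∃ v ≠ 0, A *ᵥ v = 0 := by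
  rw [hA.posDef_iff_det_ne_zero, not_not] at hA'
  exact exists_mulVec_eq_zero_iff.mpr hA'

end RCLike

end Matrix

theorem stmt8_general (d : ℕ) (ρ₀ : Matrix (Fin d) (Fin d) ℂ)
    (hpsd : ρ₀.PosSemidef) (hnd : ¬ ρ₀.PosDef) :
    ∃ (ρ₁ P : Matrix (Fin d) (Fin d) ℂ),
      ρ₁.PosSemidef ∧ ρ₁.trace = 1 ∧
      P.PosSemidef ∧ (1 - P).PosSemidef ∧
      (P * ρ₀).trace = 0 ∧ (P * ρ₁).trace = 1 := by
  obtain ⟨v, hv, hρ₀v⟩ := hpsd.exists_mulVec_eq_zero_of_not_posDef hnd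
  have hv' : star v ⬝ᵥ v ≠ 0 := dotProduct_star_self_eq_zero.not.mpr hv
  have hP := isStarProjection_lineProjection hv'
  refine ⟨lineProjection v, lineProjection v, hP.posSemidef, trace_lineProjection hv',
    hP.posSemidef, hP.one_sub.posSemidef, trace_lineProjection_mul_eq_zero hρ₀v, ?_⟩
  rw [hP.isIdempotentElem.eq, trace_lineProjection hv']

theorem stmt8 (d : ℕ) (ρ₀ : Matrix (Fin d) (Fin d) ℂ)
    (hpsd : ρ₀.PosSemidef) (htr : ρ₀.trace = 1) (hnd : ¬ ρ₀.PosDef) :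
    ∃ (ρ₁ P : Matrix (Fin d) (Fin d) ℂ),
      ρ₁.PosSemidef ∧ ρ₁.trace = 1 ∧
      P.PosSemidef ∧ (1 - P).PosSemidef ∧
      (P * ρ₀).trace = 0 ∧ (P * ρ₁).trace = 1 :=
  stmt8_general d ρ₀ hpsd hnd
end

section
/- Let ρ be a complex matrix indexed by (Fin m × Fin n) × (Fin m × Fin n), let ι be a finite index type, and let K : ι → Matrix (Fin n) (Fin n) ℂ satisfy ∑_i K_iᴴ·K_i = 1ₙ. Then ptr₂( ∑_i (1ₘ ⊗ₖ K_i) · ρ · (1ₘ ⊗ₖ K_i)ᴴ ) = ptr₂(ρ). That is, applying any trace-preserving operation (given in Kraus form) to the second subsystem does not change the reduced state of the first subsystem — no signalling without interaction. -/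
open Matrix
open scoped Kronecker

noncomputable section

theorem stmt9 {m n : ℕ} {ι : Type*} [Fintype ι]
    (ρ : Matrix (Fin m × Fin n) (Fin m × Fin n) ℂ)
    (K : ι → Matrix (Fin n) (Fin n) ℂ)
    (hK : ∑ i, (K i)ᴴ * K i = 1) :
    ptr2 (∑ i, ((1 : Matrix (Fin m) (Fin m) ℂ) ⊗ₖ K i) * ρ *
        (((1 : Matrix (Fin m) (Fin m) ℂ) ⊗ₖ K i)ᴴ)) = ptr2 ρ := by
  ext i j
  have h : ∀ a b : Fin n, (∑ t, ∑ k, (starRingEnd ℂ) (K t k b) * K t k a) = if b = a then 1 else 0 := by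
    intro a b
    have := Matrix.ext_iff.mpr hK b a
    simpa [Matrix.sum_apply, mul_apply, conjTranspose_apply, one_apply] using this
  simp only [ptr2, of_apply, Matrix.sum_apply, mul_apply, conjTranspose_apply,
    kroneckerMap_apply, Fintype.sum_prod_type, one_apply, star_one, star_zero,
    ite_mul, mul_ite, one_mul, mul_one, zero_mul, mul_zero,
    Finset.sum_ite_eq, Finset.sum_ite_eq', Finset.mem_univ, if_true, star_mul']
  simp only [Finset.sum_ite_irrel, Finset.sum_const_zero, Finset.sum_ite_eq, Finset.mem_univ,
    if_true, apply_ite (star : ℂ → ℂ), star_zero, mul_ite, mul_zero, ite_mul, zero_mul]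
  simp only [Finset.sum_mul]
  have key : ∀ (x2 x3 : Fin n),
      (∑ t : ι, ∑ x : Fin n, (K t x x3 * ρ (i, x3) (j, x2)) * star (K t x x2))
        = ρ (i, x3) (j, x2) * (if x2 = x3 then 1 else 0) := by
    intro x2 x3
    rw [← h x3 x2, Finset.mul_sum]
    refine Finset.sum_congr rfl fun t _ => ?_
    rw [Finset.mul_sum]
    refine Finset.sum_congr rfl fun x _ => ?_
    simp only [starRingEnd_apply]
    ring
  conv_lhs =>
    rw [Finset.sum_comm]
    enter [2, t]
    rw [Finset.sum_comm]
    enter [2, x2]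
    rw [Finset.sum_comm]
  conv_lhs =>
    rw [Finset.sum_comm]
    enter [2, x2]
    rw [Finset.sum_comm]
  simp only [key]
  simp [Finset.sum_ite_eq, mul_ite, mul_one, mul_zero]

end
end

section
/- Let d ≥ 1, let Φ be the maximally entangled vector indexed by Fin d × Fin d with Φ(j,k) = 1/√d if j = k and 0 otherwise, and let p ∈ [0,1]. Then there exists a positive semidefinite complex matrix τ indexed by (Fin d × Fin d) × (Fin d × Fin d) with trace 1 such that (1/d²) • 1 = p • (ΦΦᴴ) + (1 − p) • τ if and only if p ≤ 1/d². That is, the maximum weight of the maximally entangled state in an ensemble decomposition of the invariant state of two conjugate systems — the maximum probability of conclusive teleportation — equals 1/d². -/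
/-!
Pairing the decomposition with `Φ` gives `1/d² = p + (1 - p) ⟨Φ, τ Φ⟩ ≥ p`. Conversely, `Φ` is a
unit vector, so `P = ΦΦᴴ` is an orthogonal projection and
`(1/d²) • 1 - p • P = (1/d²) • (1 - P) + (1/d² - p) • P` is positive semidefinite of trace
`1 - p`; normalising it gives `τ`.
-/

open Matrix
open scoped ComplexOrder

noncomputable section

/-- The maximally entangled vector on `ℂ^d ⊗ ℂ^d`. -/
def PhiME (d : ℕ) : Fin d × Fin d → ℂ := fun p =>
  if p.1 = p.2 then ((1 / Real.sqrt d : ℝ) : ℂ) else 0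

section OuterProduct

variable {ι : Type*} [Fintype ι] {v : ι → ℂ}

omit [Fintype ι] in
theorem outerC_eq_vecMulVec (v : ι → ℂ) : outerC v = vecMulVec v (star v) := rfl

theorem posSemidef_outerC (v : ι → ℂ) : (outerC v).PosSemidef :=
  posSemidef_vecMulVec_self_star v

theorem trace_outerC (v : ι → ℂ) : (outerC v).trace = star v ⬝ᵥ v := by
  rw [outerC_eq_vecMulVec, trace_vecMulVec, dotProduct_comm]

theorem outerC_mulVec_self (hv : star v ⬝ᵥ v = 1) : outerC v *ᵥ v = v := by
  rw [outerC_eq_vecMulVec, vecMulVec_mulVec, hv, MulOpposite.op_one, one_smul]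

theorem outerC_mul_self (hv : star v ⬝ᵥ v = 1) : outerC v * outerC v = outerC v := by
  rw [outerC_eq_vecMulVec, vecMulVec_mul_vecMulVec, hv, one_smul]

theorem posSemidef_one_sub_outerC [DecidableEq ι] (hv : star v ⬝ᵥ v = 1) :
    (1 - outerC v).PosSemidef := by
  have hP : (outerC v)ᴴ = outerC v := (posSemidef_outerC v).isHermitian
  have hQ : (1 - outerC v)ᴴ * (1 - outerC v) = 1 - outerC v := by
    rw [conjTranspose_sub, conjTranspose_one, hP, sub_mul, mul_sub, mul_sub, outerC_mul_self hv]
    simp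
  exact hQ ▸ posSemidef_conjTranspose_mul_self _

theorem le_of_smul_one_eq_smul_outerC_add [DecidableEq ι] {c p : ℝ} {τ : Matrix ι ι ℂ}
    (hv : star v ⬝ᵥ v = 1) (hτ : τ.PosSemidef) (hp : p ≤ 1)
    (h : c • (1 : Matrix ι ι ℂ) = p • outerC v + (1 - p) • τ) : p ≤ c := by
  have hpair := congrArg (fun M => star v ⬝ᵥ (M *ᵥ v)) h
  simp only [add_mulVec, smul_mulVec, one_mulVec, outerC_mulVec_self hv, dotProduct_add,
    dotProduct_smul, hv] at hpair
  have hτv : (0 : ℂ) ≤ (1 - p : ℝ) • (star v ⬝ᵥ (τ *ᵥ v)) :=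
    smul_nonneg (sub_nonneg.2 hp) (hτ.dotProduct_mulVec_nonneg v)
  have hpc : ((p : ℝ) : ℂ) ≤ c := by
    simp only [Complex.real_smul, mul_one] at hpair hτv
    rw [hpair]
    exact le_add_of_nonneg_right hτv
  exact_mod_cast hpc

theorem posSemidef_smul_one_sub_smul_outerC [DecidableEq ι] {c p : ℝ} (hv : star v ⬝ᵥ v = 1)
    (hc : 0 ≤ c) (hp : p ≤ c) : (c • (1 : Matrix ι ι ℂ) - p • outerC v).PosSemidef := by
  have h : c • (1 : Matrix ι ι ℂ) - p • outerC v = c • (1 - outerC v) + (c - p) • outerC v := by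
    rw [smul_sub, sub_smul]
    abel
  rw [h]
  exact ((posSemidef_one_sub_outerC hv).smul hc).add ((posSemidef_outerC v).smul (sub_nonneg.2 hp))

end OuterProduct

/-- When `c = 0` the matrix `M` vanishes and the given state `ρ` serves as `τ`. -/
theorem Matrix.PosSemidef.exists_trace_eq_one_smul_eq {ι : Type*} [Fintype ι]
    {M ρ : Matrix ι ι ℂ} {c : ℝ} (hM : M.PosSemidef) (hc : 0 ≤ c) (htr : M.trace = c)
    (hρ : ρ.PosSemidef) (hρtr : ρ.trace = 1) :
    ∃ τ : Matrix ι ι ℂ, τ.PosSemidef ∧ τ.trace = 1 ∧ M = c • τ := by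
  rcases hc.eq_or_lt with rfl | hc
  · refine ⟨ρ, hρ, hρtr, ?_⟩
    rw [zero_smul, ← hM.trace_eq_zero_iff, htr, Complex.ofReal_zero]
  · refine ⟨c⁻¹ • M, hM.smul (inv_nonneg.2 hc.le), ?_, ?_⟩
    · rw [trace_smul, htr, Complex.real_smul, ← Complex.ofReal_mul, inv_mul_cancel₀ hc.ne',
        Complex.ofReal_one]
    · rw [smul_smul, mul_inv_cancel₀ hc.ne', one_smul]

theorem star_PhiME_dotProduct_self {d : ℕ} (hd : d ≠ 0) : star (PhiME d) ⬝ᵥ PhiME d = 1 := by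
  have hd' : (0 : ℝ) < d := by positivity
  simp only [dotProduct, Fintype.sum_prod_type, PhiME, Pi.star_apply, one_div, Complex.ofReal_inv,
    RCLike.star_def, mul_ite, mul_zero, Finset.sum_ite_eq, Finset.mem_univ, ↓reduceIte, map_inv₀,
    Complex.conj_ofReal, Finset.sum_const, Finset.card_univ, Fintype.card_fin, nsmul_eq_mul]
  rw [← mul_inv, ← Complex.ofReal_mul, Real.mul_self_sqrt hd'.le, Complex.ofReal_natCast,
    mul_inv_cancel₀ (Nat.cast_ne_zero.2 hd)]

theorem trace_smul_one_fin_prod {d : ℕ} (hd : d ≠ 0) :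
    ((1 / (d ^ 2 : ℝ)) • (1 : Matrix (Fin d × Fin d) (Fin d × Fin d) ℂ)).trace = 1 := by
  rw [trace_smul, trace_one, Fintype.card_prod, Fintype.card_fin, Complex.real_smul]
  push_cast
  field_simp

theorem stmt12_general (d : ℕ) (hd : 1 ≤ d) (p : ℝ) (hp1 : p ≤ 1) :
    (∃ τ : Matrix (Fin d × Fin d) (Fin d × Fin d) ℂ,
        τ.PosSemidef ∧ τ.trace = 1 ∧
        (1 / (d ^ 2 : ℝ)) • (1 : Matrix (Fin d × Fin d) (Fin d × Fin d) ℂ)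
          = p • outerC (PhiME d) + (1 - p) • τ)
      ↔ p ≤ 1 / (d ^ 2 : ℝ) := by
  have hd0 : d ≠ 0 := Nat.one_le_iff_ne_zero.mp hd
  have hΦ := star_PhiME_dotProduct_self hd0
  constructor
  · rintro ⟨τ, hτ, -, h⟩
    exact le_of_smul_one_eq_smul_outerC_add hΦ hτ hp1 h
  · intro hp
    have hM := posSemidef_smul_one_sub_smul_outerC hΦ (by positivity) hp
    have htr : ((1 / (d ^ 2 : ℝ)) • (1 : Matrix (Fin d × Fin d) (Fin d × Fin d) ℂ)
        - p • outerC (PhiME d)).trace = (1 - p : ℝ) := by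
      rw [trace_sub, trace_smul_one_fin_prod hd0, trace_smul, trace_outerC, hΦ, Complex.real_smul,
        mul_one, Complex.ofReal_sub, Complex.ofReal_one]
    obtain ⟨τ, hτ, hτtr, h⟩ := hM.exists_trace_eq_one_smul_eq (sub_nonneg.2 hp1) htr
      (posSemidef_outerC _) (by rw [trace_outerC, hΦ])
    exact ⟨τ, hτ, hτtr, by rw [← h]; abel⟩

theorem stmt12 (d : ℕ) (hd : 1 ≤ d) (p : ℝ) (hp0 : 0 ≤ p) (hp1 : p ≤ 1) :
    (∃ τ : Matrix (Fin d × Fin d) (Fin d × Fin d) ℂ,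
        τ.PosSemidef ∧ τ.trace = 1 ∧
        (1 / (d ^ 2 : ℝ)) • (1 : Matrix (Fin d × Fin d) (Fin d × Fin d) ℂ)
          = p • outerC (PhiME d) + (1 - p) • τ)
      ↔ p ≤ 1 / (d ^ 2 : ℝ) :=
  stmt12_general d hd p hp1

end
end

section
/- Let ρ and ρ' be complex matrices indexed by (Fin m × Fin n) × (Fin m × Fin n). If trace((A ⊗ₖ B) · ρ) = trace((A ⊗ₖ B) · ρ') for every m×m complex matrix A with 0 ≤ A ≤ 1ₘ and every n×n complex matrix B with 0 ≤ B ≤ 1ₙ (Loewner order), then ρ = ρ'. That is, complex quantum theory satisfies Local Tomography: product effects are tomographically complete for bipartite states. -/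
/-!
In a C⋆-algebra every element is a complex combination of positive contractions, i.e. of
elements of `[0, 1]`; for matrices with the Loewner order these are exactly the effects.
Hence the bilinear form `(A, B) ↦ trace ((A ⊗ₖ B) * ρ)`, which the hypothesis pins down on pairs
of effects, is determined everywhere, and evaluating it on pairs of matrix units recovers the
entries of `ρ`.
-/

open Matrix
open scoped Kronecker ComplexOrder

theorem CStarAlgebra.span_Icc_zero_one {A : Type*} [CStarAlgebra A] [PartialOrder A]
    [StarOrderedRing A] : Submodule.span ℂ (Set.Icc (0 : A) 1) = ⊤ := by
  refine eq_top_mono (Submodule.span_mono ?_) CStarAlgebra.span_nonneg_inter_unitClosedBall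
  rintro a ⟨ha, ha_norm⟩
  exact ⟨ha, (CStarAlgebra.norm_le_one_iff_of_nonneg a).mp (by simpa using ha_norm)⟩

open scoped Matrix.Norms.L2Operator MatrixOrder in
theorem Matrix.span_posSemidef_one_sub_posSemidef (n : Type*) [Fintype n] [DecidableEq n] :
    Submodule.span ℂ {A : Matrix n n ℂ | A.PosSemidef ∧ (1 - A).PosSemidef} = ⊤ := by
  have h_Icc : {A : Matrix n n ℂ | A.PosSemidef ∧ (1 - A).PosSemidef} = Set.Icc 0 1 := by
    ext A
    simp only [Set.mem_Icc, Matrix.le_iff, sub_zero]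
    rfl
  rw [h_Icc]
  exact CStarAlgebra.span_Icc_zero_one

theorem LinearMap.ext_on₂ {R M N P : Type*} [CommSemiring R] [AddCommMonoid M] [AddCommMonoid N]
    [AddCommMonoid P] [Module R M] [Module R N] [Module R P] {s : Set M} {t : Set N}
    (hs : Submodule.span R s = ⊤) (ht : Submodule.span R t = ⊤) {f g : M →ₗ[R] N →ₗ[R] P}
    (h : ∀ x ∈ s, ∀ y ∈ t, f x y = g x y) : f = g :=
  LinearMap.ext_on hs fun x hx => LinearMap.ext_on ht fun y hy => h x hx y hy

theorem Matrix.ext_of_trace_kronecker_mul {R l n : Type*} [Semiring R] [Fintype l] [Fintype n]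
    [DecidableEq l] [DecidableEq n] {ρ ρ' : Matrix (l × n) (l × n) R}
    (h : ∀ (A : Matrix l l R) (B : Matrix n n R), ((A ⊗ₖ B) * ρ).trace = ((A ⊗ₖ B) * ρ').trace) :
    ρ = ρ' := by
  ext ⟨i₁, i₂⟩ ⟨j₁, j₂⟩
  simpa [single_kronecker_single, trace_single_mul] using h (single j₁ i₁ 1) (single j₂ i₂ 1)

def Matrix.traceKroneckerMul {R l n : Type*} [CommSemiring R] [Fintype l] [Fintype n]
    (ρ : Matrix (l × n) (l × n) R) : Matrix l l R →ₗ[R] Matrix n n R →ₗ[R] R :=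
  kroneckerBilinear.compr₂ (traceLinearMap (l × n) R R ∘ₗ LinearMap.mulRight R ρ)

theorem stmt13 {m n : ℕ} (ρ ρ' : Matrix (Fin m × Fin n) (Fin m × Fin n) ℂ)
    (h : ∀ (A : Matrix (Fin m) (Fin m) ℂ) (B : Matrix (Fin n) (Fin n) ℂ),
      A.PosSemidef → ((1 : Matrix (Fin m) (Fin m) ℂ) - A).PosSemidef →
      B.PosSemidef → ((1 : Matrix (Fin n) (Fin n) ℂ) - B).PosSemidef →
      ((A ⊗ₖ B) * ρ).trace = ((A ⊗ₖ B) * ρ').trace) :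
    ρ = ρ' := by
  have h_eq : traceKroneckerMul ρ = traceKroneckerMul ρ' :=
    LinearMap.ext_on₂ (span_posSemidef_one_sub_posSemidef _)
      (span_posSemidef_one_sub_posSemidef _) fun A hA B hB => h A B hA.1 hA.2 hB.1 hB.2
  exact ext_of_trace_kronecker_mul fun A B => LinearMap.congr_fun₂ h_eq A B
end

section
/- (Pure Steering in quantum theory.) Let Ψ be a unit vector indexed by Fin m × Fin n, let ρ = ptr₂(ΨΨᴴ) be its marginal on the first system, let ι be a finite index type, and let (ρ_x)_{x∈ι} be positive semidefinite m×m matrices with ∑_x ρ_x = ρ (an ensemble decomposition of ρ). Then there exists a family (B_x)_{x∈ι} of positive semidefinite n×n matrices with ∑_x B_x = 1ₙ (a measurement on the second system) such that ptr₂((1ₘ ⊗ₖ B_x) · (ΨΨᴴ)) = ρ_x for every x ∈ ι. That is, every ensemble decomposition of the marginal of a pure bipartite state can be generated remotely by a measurement on the other system. -/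
/-!
Reshape `Ψ` into the `m × n` matrix `M = of (curry Ψ)`. Then `ptr₂(ΨΨᴴ) = M Mᴴ =: ρ` and
`ptr₂((1 ⊗ₖ B) ΨΨᴴ) = M Bᵀ Mᴴ`, so it suffices to find positive semidefinite `W x` with `∑ W x = 1` and
`M (W x) Mᴴ = ρₓ`. Let `g` be the Moore–Penrose inverse of `ρ`, obtained as `cfc (·⁻¹) ρ` thanks to
the convention `0⁻¹ = 0`, and put `K = g M`. From `0 ≤ ρₓ ≤ ρ` the kernel of `ρ` lies in that of
`ρₓ`, whence `ρ g ρₓ g ρ = ρₓ`, i.e. `M (Kᴴ ρₓ K) Mᴴ = ρₓ`. The `Kᴴ ρₓ K` sum to the projection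
`Q = Kᴴ ρ K`, and adding `1 - Q`, which `M · Mᴴ` kills, to one of them gives the measurement.
-/

open Matrix
open scoped Kronecker ComplexOrder

noncomputable section

open scoped MatrixOrder

namespace Matrix

variable {𝕜 n : Type*} [RCLike 𝕜] [Fintype n]

lemma mul_eq_zero_of_le_of_mul_eq_zero {p : Type*} [Fintype p] {A B : Matrix n n 𝕜}
    {C : Matrix n p 𝕜} (hA : 0 ≤ A) (hAB : A ≤ B) (hBC : B * C = 0) : A * C = 0 := by
  refine ext_iff_mulVec.mpr fun v => ?_
  set w := C *ᵥ v
  have hBw : B *ᵥ w = 0 := by rw [mulVec_mulVec, hBC, zero_mulVec]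
  have hle : star w ⬝ᵥ A *ᵥ w ≤ 0 := by
    simpa [sub_mulVec, hBw] using (le_iff.mp hAB).dotProduct_mulVec_nonneg w
  have hAw : star w ⬝ᵥ A *ᵥ w = 0 := le_antisymm hle (hA.posSemidef.dotProduct_mulVec_nonneg w)
  rw [← mulVec_mulVec, (hA.posSemidef.dotProduct_mulVec_zero_iff w).mp hAw, zero_mulVec]

section PseudoInverse

variable [DecidableEq n] {A B : Matrix n n 𝕜}

lemma cfc_mul_cfc (f g : ℝ → ℝ) : cfc f A * cfc g A = cfc (fun x => f x * g x) A :=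
  (cfc_mul f g A (finite_real_spectrum.continuousOn f) (finite_real_spectrum.continuousOn g)).symm

lemma mul_cfc_inv_mul_self (hA : IsSelfAdjoint A) : A * cfc (·⁻¹ : ℝ → ℝ) A * A = A :=
  calc A * cfc (·⁻¹ : ℝ → ℝ) A * A = cfc (fun x : ℝ => x * x⁻¹ * x) A := by
        rw [← cfc_mul_cfc, ← cfc_mul_cfc, cfc_id' ℝ A]
    _ = A := by simp only [mul_inv_mul_cancel, cfc_id' ℝ A]

lemma cfc_inv_mul_self_mul_cfc_inv (hA : IsSelfAdjoint A) :
    cfc (·⁻¹ : ℝ → ℝ) A * A * cfc (·⁻¹ : ℝ → ℝ) A = cfc (·⁻¹ : ℝ → ℝ) A :=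
  calc _ = cfc (fun x : ℝ => x⁻¹ * x * x⁻¹) A := by
        rw [← cfc_mul_cfc, ← cfc_mul_cfc, cfc_id' ℝ A]
    _ = _ := cfc_congr fun x _ => by simpa using mul_inv_mul_cancel x⁻¹

lemma cfc_inv_nonneg (hA : 0 ≤ A) : 0 ≤ cfc (·⁻¹ : ℝ → ℝ) A :=
  cfc_nonneg fun _ hx => inv_nonneg.mpr (spectrum_nonneg_of_nonneg hA hx)

lemma mul_cfc_inv_mul_mul_cfc_inv_mul_of_le (hA : 0 ≤ A) (hAB : A ≤ B) :
    B * cfc (·⁻¹ : ℝ → ℝ) B * A * cfc (·⁻¹ : ℝ → ℝ) B * B = A := by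
  set g := cfc (·⁻¹ : ℝ → ℝ) B
  have hB : 0 ≤ B := hA.trans hAB
  have hg : gᴴ = g := (cfc_inv_nonneg hB).isSelfAdjoint
  have hAgB : A * g * B = A := by
    have hB₀ : B * (1 - g * B) = 0 := by
      rw [mul_sub, mul_one, ← mul_assoc, mul_cfc_inv_mul_self hB.isSelfAdjoint, sub_self]
    have := mul_eq_zero_of_le_of_mul_eq_zero hA hAB hB₀
    rwa [mul_sub, mul_one, ← mul_assoc, sub_eq_zero, eq_comm] at this
  have hBgA : B * g * A = A := by
    simpa [mul_assoc, hg, hA.posSemidef.isHermitian.eq, hB.posSemidef.isHermitian.eq]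
      using congrArg conjTranspose hAgB
  rw [hBgA, hAgB]

end PseudoInverse

lemma exists_sum_eq_one_mul_mul_conjTranspose_eq_of_sum_le_one {m ι : Type*} [Fintype m]
    [DecidableEq n] [Fintype ι] [Nonempty ι] (M : Matrix m n 𝕜) {V : ι → Matrix n n 𝕜}
    (hV : ∀ x, 0 ≤ V x) (hle : ∑ x, V x ≤ 1) (hM : M * (1 - ∑ x, V x) * Mᴴ = 0) :
    ∃ W : ι → Matrix n n 𝕜,
      (∀ x, 0 ≤ W x) ∧ ∑ x, W x = 1 ∧ ∀ x, M * W x * Mᴴ = M * V x * Mᴴ := by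
  classical
  obtain ⟨x₀⟩ := ‹Nonempty ι›
  refine ⟨fun x => V x + if x = x₀ then 1 - ∑ y, V y else 0, fun x => ?_, ?_, fun x => ?_⟩
  · exact add_nonneg (hV x) (by split_ifs; exacts [sub_nonneg.mpr hle, le_rfl])
  · rw [Finset.sum_add_distrib, Finset.sum_ite_eq', if_pos (Finset.mem_univ _), add_sub_cancel]
  · dsimp only
    split_ifs <;> simp [Matrix.mul_add, Matrix.add_mul, hM]

theorem exists_posSemidef_sum_eq_one_mul_mul_conjTranspose_eq {m ι : Type*} [Fintype m]
    [DecidableEq m] [DecidableEq n] [Fintype ι] [Nonempty ι] (M : Matrix m n 𝕜)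
    (σ : ι → Matrix m m 𝕜) (hσ : ∀ x, (σ x).PosSemidef) (hsum : ∑ x, σ x = M * Mᴴ) :
    ∃ W : ι → Matrix n n 𝕜,
      (∀ x, (W x).PosSemidef) ∧ ∑ x, W x = 1 ∧ ∀ x, M * W x * Mᴴ = σ x := by
  set ρ := M * Mᴴ with hρM
  clear_value ρ
  have hρ : 0 ≤ ρ := hρM ▸ (posSemidef_self_mul_conjTranspose M).nonneg
  set g := cfc (·⁻¹ : ℝ → ℝ) ρ
  have hρgρ : ρ * g * ρ = ρ := mul_cfc_inv_mul_self hρ.isSelfAdjoint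
  have hgρg : g * ρ * g = g := cfc_inv_mul_self_mul_cfc_inv hρ.isSelfAdjoint
  have hg : gᴴ = g := (cfc_inv_nonneg hρ).isSelfAdjoint
  have hσρ (x : ι) : ρ * g * σ x * g * ρ = σ x :=
    mul_cfc_inv_mul_mul_cfc_inv_mul_of_le (hσ x).nonneg
      (hsum ▸ Finset.single_le_sum (fun y _ => (hσ y).nonneg) (Finset.mem_univ x))
  clear_value g
  set K := g * M with hK
  have hMK : M * Kᴴ = ρ * g := by rw [hK, conjTranspose_mul, hg, ← Matrix.mul_assoc, hρM]
  have hKM : K * Mᴴ = g * ρ := by rw [hK, Matrix.mul_assoc, hρM]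
  have hKK : K * Kᴴ = g := by rw [hK, Matrix.mul_assoc, hMK, ← Matrix.mul_assoc, hgρg]
  clear_value K
  have hconj (X : Matrix m m 𝕜) : M * (Kᴴ * X * K) * Mᴴ = ρ * g * X * g * ρ := by
    calc _ = M * Kᴴ * X * (K * Mᴴ) := by simp only [Matrix.mul_assoc]
      _ = _ := by rw [hMK, hKM, ← Matrix.mul_assoc]
  have hsumV : ∑ x, Kᴴ * σ x * K = Kᴴ * ρ * K := by rw [← Matrix.sum_mul, ← Matrix.mul_sum, hsum]
  have hQ : IsStarProjection (Kᴴ * ρ * K) := by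
    refine ⟨?_, (hρ.posSemidef.conjTranspose_mul_mul_same K).nonneg.isSelfAdjoint⟩
    calc Kᴴ * ρ * K * (Kᴴ * ρ * K) = Kᴴ * (ρ * (K * Kᴴ) * ρ) * K := by
          simp only [Matrix.mul_assoc]
      _ = Kᴴ * ρ * K := by rw [hKK, hρgρ]
  have hMQ : M * (1 - ∑ x, Kᴴ * σ x * K) * Mᴴ = 0 := by
    rw [hsumV, Matrix.mul_sub, Matrix.sub_mul, Matrix.mul_one, hconj, hρgρ, hρgρ, hρM, sub_self]
  obtain ⟨W, hW, hWsum, hWM⟩ := exists_sum_eq_one_mul_mul_conjTranspose_eq_of_sum_le_one M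
    (fun x => ((hσ x).conjTranspose_mul_mul_same K).nonneg) (hsumV ▸ hQ.le_one) hMQ
  exact ⟨W, fun x => (hW x).posSemidef, hWsum, fun x => by rw [hWM, hconj, hσρ]⟩

end Matrix

section PureSteering

variable {m n : ℕ}

lemma ptr2_outerC (Ψ : Fin m × Fin n → ℂ) :
    ptr2 (outerC Ψ) = of (Function.curry Ψ) * (of (Function.curry Ψ))ᴴ := by
  ext i j
  simp [ptr2, outerC, mul_apply]

lemma ptr2_one_kronecker_mul_outerC (Ψ : Fin m × Fin n → ℂ) (B : Matrix (Fin n) (Fin n) ℂ) :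
    ptr2 (((1 : Matrix (Fin m) (Fin m) ℂ) ⊗ₖ B) * outerC Ψ)
      = of (Function.curry Ψ) * Bᵀ * (of (Function.curry Ψ))ᴴ := by
  ext i j
  simp only [ptr2, outerC, RCLike.star_def, mul_apply, kroneckerMap_apply, one_apply, ite_mul,
    one_mul, zero_mul, of_apply, Fintype.sum_prod_type, Finset.sum_ite_irrel, Finset.sum_const_zero,
    Finset.sum_ite_eq, Finset.mem_univ, ↓reduceIte, Function.curry_apply, transpose_apply,
    conjTranspose_apply, Finset.sum_mul]
  exact Finset.sum_congr rfl fun k _ => Finset.sum_congr rfl fun l _ => by ring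

end PureSteering

theorem stmt17 {m n : ℕ} {ι : Type*} [Fintype ι]
    (Ψ : Fin m × Fin n → ℂ) (hΨ : ∑ a, ‖Ψ a‖ ^ 2 = 1)
    (ρx : ι → Matrix (Fin m) (Fin m) ℂ)
    (hpsd : ∀ x, (ρx x).PosSemidef)
    (hsum : ∑ x, ρx x = ptr2 (outerC Ψ)) :
    ∃ B : ι → Matrix (Fin n) (Fin n) ℂ,
      (∀ x, (B x).PosSemidef) ∧ (∑ x, B x = 1) ∧
      ∀ x, ptr2 (((1 : Matrix (Fin m) (Fin m) ℂ) ⊗ₖ B x) * outerC Ψ) = ρx x := by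
  have hΨ₀ : of (Function.curry Ψ) ≠ 0 := fun h => by
    simp [show Ψ = 0 from funext fun a => congrFun₂ h a.1 a.2] at hΨ
  have : Nonempty ι := by
    by_contra h
    rw [not_nonempty_iff] at h
    rw [ptr2_outerC, Finset.univ_eq_empty, Finset.sum_empty, eq_comm,
      self_mul_conjTranspose_eq_zero] at hsum
    exact hΨ₀ hsum
  obtain ⟨W, hW, hWsum, hWΨ⟩ := exists_posSemidef_sum_eq_one_mul_mul_conjTranspose_eq _ ρx hpsd
    (hsum.trans (ptr2_outerC Ψ))
  refine ⟨fun x => (W x)ᵀ, fun x => (hW x).transpose, ?_, fun x => ?_⟩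
  · rw [← transpose_sum, hWsum, transpose_one]
  · rw [ptr2_one_kronecker_mul_outerC, transpose_transpose, hWΨ]

end
end
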